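/- Suppose π is a 123-avoiding permutation of {1,...,n-1} with π(1) = i, and let i < j ≤ n. Form π' of {1,...,n} by increasing every entry of π that is ≥ j by 1 and prepending j. Then π' avoids 123. -/
import Mathlib


/-- Let `π` be a 123-avoiding permutation of `{1,…,n-1}` with first entry `i`,
and let `i < j ≤ n`.  Prepending `j` after increasing every entry `≥ j` by one
yields a word on `{1,…,n}` that still avoids 123.  Values are 1-indexed, so a
`Fin` value `v` represents the entry `v + 1`. -/
theorem prepend_bodyguarded_entry_avoids_123 (n i j : ℕ)
    (hi : 1 ≤ i) (hij : i < j) (hjn : j ≤ n)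
    (π : Equiv.Perm (Fin (n - 1)))
    (hav : ¬ ∃ a b c : Fin (n - 1), a < b ∧ b < c ∧ π a < π b ∧ π b < π c)
    (hfirst : ∀ m : Fin (n - 1), m.val = 0 → ((π m : Fin (n - 1)) : ℕ) + 1 = i) :
    let f : Fin n → Fin n := fun k =>
      if hk : k.val = 0 then ⟨j - 1, by omega⟩
      else
        let v := π ⟨k.val - 1, by have := k.isLt; omega⟩
        if (v : ℕ) + 1 ≥ j then ⟨(v : ℕ) + 1, by have := v.isLt; omega⟩
        else ⟨(v : ℕ), by have := v.isLt; omega⟩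
    ¬ ∃ a b c : Fin n, a < b ∧ b < c ∧ f a < f b ∧ f b < f c := by
  intro f
  rintro ⟨a, b, c, hab, hbc, h1, h2⟩
  apply hav
  rw [Fin.lt_def] at hab hbc h1 h2
  have hb0 : ¬ b.val = 0 := by omega
  have hc0 : ¬ c.val = 0 := by omega
  have hbn : b.val - 1 < n - 1 := by have := b.isLt; omega
  have hcn : c.val - 1 < n - 1 := by have := c.isLt; omega
  have hvbn := (π ⟨b.val - 1, hbn⟩).isLt
  have hvcn := (π ⟨c.val - 1, hcn⟩).isLt
  have hfb : (f b : ℕ) =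
      if ((π ⟨b.val - 1, hbn⟩ : Fin (n-1)) : ℕ) + 1 ≥ j
      then ((π ⟨b.val - 1, hbn⟩ : Fin (n-1)) : ℕ) + 1
      else ((π ⟨b.val - 1, hbn⟩ : Fin (n-1)) : ℕ) := by
    simp only [f, dif_neg hb0]
    split_ifs <;> rfl
  have hfc : (f c : ℕ) =
      if ((π ⟨c.val - 1, hcn⟩ : Fin (n-1)) : ℕ) + 1 ≥ j
      then ((π ⟨c.val - 1, hcn⟩ : Fin (n-1)) : ℕ) + 1
      else ((π ⟨c.val - 1, hcn⟩ : Fin (n-1)) : ℕ) := by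
    simp only [f, dif_neg hc0]
    split_ifs <;> rfl
  rw [hfb, hfc] at h2
  rw [hfb] at h1
  by_cases ha0 : a.val = 0
  · have hfa : (f a : ℕ) = j - 1 := by simp only [f, dif_pos ha0]
    rw [hfa] at h1
    have hn1 : 0 < n - 1 := by omega
    have h0 := hfirst ⟨0, hn1⟩ rfl
    -- b's value must be shifted
    have hvbj : ((π ⟨b.val - 1, hbn⟩ : Fin (n-1)) : ℕ) + 1 ≥ j := by
      by_contra h
      rw [if_neg h] at h1
      omega
    rw [if_pos hvbj] at h1 h2
    have hvcj : ((π ⟨c.val - 1, hcn⟩ : Fin (n-1)) : ℕ) + 1 ≥ j := by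
      by_contra h
      rw [if_neg h] at h2
      omega
    rw [if_pos hvcj] at h2
    have hb1 : b.val ≠ 1 := by
      intro hb1
      have he : (⟨b.val - 1, hbn⟩ : Fin (n - 1)) = ⟨0, hn1⟩ := by
        ext; simp [hb1]
      rw [he] at hvbj
      omega
    refine ⟨⟨0, hn1⟩, ⟨b.val - 1, hbn⟩, ⟨c.val - 1, hcn⟩, ?_, ?_, ?_, ?_⟩
    · rw [Fin.lt_def]; simp; omega
    · rw [Fin.lt_def]; simp; omega
    · rw [Fin.lt_def]; omega
    · rw [Fin.lt_def]; omega
  · have han : a.val - 1 < n - 1 := by have := a.isLt; omega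
    have hvan := (π ⟨a.val - 1, han⟩).isLt
    have hfa : (f a : ℕ) =
        if ((π ⟨a.val - 1, han⟩ : Fin (n-1)) : ℕ) + 1 ≥ j
        then ((π ⟨a.val - 1, han⟩ : Fin (n-1)) : ℕ) + 1
        else ((π ⟨a.val - 1, han⟩ : Fin (n-1)) : ℕ) := by
      simp only [f, dif_neg ha0]
      split_ifs <;> rfl
    rw [hfa] at h1
    refine ⟨⟨a.val - 1, han⟩, ⟨b.val - 1, hbn⟩, ⟨c.val - 1, hcn⟩, ?_, ?_, ?_, ?_⟩
    · rw [Fin.lt_def]; simp; omega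
    · rw [Fin.lt_def]; simp; omega
    · rw [Fin.lt_def]; split_ifs at h1 <;> omega
    · rw [Fin.lt_def]; split_ifs at h2 <;> omega
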